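/- arXiv:2512.12077 — 2 statements merged into one kernel-verified Lean document; each statement's English description precedes it below -/
import Mathlib

section
/- The number of binary shuffle squares of semi-length n is at least binom(2n, n), i.e., |S_2(n)| ≥ binom(2n, n). -/
/-- The subword of `s` indexed by the positions where `c` is `true`,
in increasing order of index. -/
def subAt {α : Type*} (s : List α) (c : ℕ → Bool) : List α :=
  (s.zipIdx.filter (fun p => c p.2)).map Prod.fst

/-- `w` is a buffer for `s`: there is a partition `(A₁, A₂)` of the index set of `s`
(given by the indicator `c` of `A₁`) with `s(A₁) = s(A₂) ∘ w`. -/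
def IsBufferOf {α : Type*} (w s : List α) : Prop :=
  ∃ c : ℕ → Bool, subAt s c = subAt s (fun i => !(c i)) ++ w

/-- `bufferSet s t` is the set `B_t(s)` of buffers of the prefix `s[1,t]`. -/
def bufferSet {α : Type*} (s : List α) (t : ℕ) : Set (List α) :=
  {w | IsBufferOf w (s.take t)}

/-- A shuffle square: a word that can be partitioned into two disjoint identical subwords. -/
def IsShuffleSquare {α : Type*} (s : List α) : Prop := IsBufferOf [] s

/-!
Read a word `w ∈ {0,1}^{2n}` with `n` letters of each kind as a lattice path. Scanning `w`, build
a word `s` while keeping a queue of the letters that the leading copy of the square has produced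
and the lagging copy still owes. A step away from the diagonal emits, for the leading copy, a
letter different from the head of the queue and appends it to the queue; a step towards the
diagonal emits the head of the queue for the lagging copy. As `w` is balanced the queue ends
empty, so `s` is a shuffle square; and a letter of `s` tells which kind of step produced it (it
equals the head of the queue or not), so `w` is recovered from `s`. This injects the
`C(2n, n)` balanced words into `S_2(n)`.
-/

lemma subAt_cons {α : Type*} (x : α) (s : List α) (c : ℕ → Bool) :
    subAt (x :: s) c = (if c 0 then [x] else []) ++ subAt s (fun i => c (i + 1)) := by
  unfold subAt
  rw [List.zipIdx_cons, List.zipIdx_succ, List.filter_cons, List.filter_map]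
  cases c 0 <;> simp [Function.comp_def]

inductive IsShuffle {α : Type*} : List α → List α → List α → Prop
  | nil : IsShuffle [] [] []
  | left {s u v : List α} (a : α) : IsShuffle s u v → IsShuffle (a :: s) (a :: u) v
  | right {s u v : List α} (a : α) : IsShuffle s u v → IsShuffle (a :: s) u (a :: v)

lemma IsShuffle.exists_subAt {α : Type*} {s u v : List α} (h : IsShuffle s u v) :
    ∃ c : ℕ → Bool, subAt s c = u ∧ subAt s (fun i => !(c i)) = v := by
  induction h with
  | nil => exact ⟨fun _ => true, rfl, rfl⟩
  | left a _ ih =>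
    obtain ⟨c, hu, hv⟩ := ih
    exact ⟨fun | 0 => true | i + 1 => c i, by simpa [subAt_cons], by simpa [subAt_cons]⟩
  | right a _ ih =>
    obtain ⟨c, hu, hv⟩ := ih
    exact ⟨fun | 0 => false | i + 1 => c i, by simpa [subAt_cons], by simpa [subAt_cons]⟩

lemma IsShuffle.isShuffleSquare {α : Type*} {s u : List α} (h : IsShuffle s u u) :
    IsShuffleSquare s := by
  obtain ⟨c, hu, hv⟩ := h.exists_subAt
  exact ⟨c, by rw [hu, hv, List.append_nil]⟩

/-- `σ` is the letter whose steps lengthen the queue `q`; it is reset whenever `q` runs empty. -/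
def queueEncode : Bool → List Bool → List Bool → List Bool
  | _, _, [] => []
  | _, [], b :: w => b :: queueEncode b [b] w
  | σ, h :: t, b :: w =>
    if b = σ then (!h) :: queueEncode σ (h :: (t ++ [!h])) w
    else h :: queueEncode σ t w

def queueDecode : Bool → List Bool → List Bool → List Bool
  | _, _, [] => []
  | _, [], x :: s => x :: queueDecode x [x] s
  | σ, h :: t, x :: s =>
    if x = h then (!σ) :: queueDecode σ t s
    else σ :: queueDecode σ (h :: (t ++ [x])) s

lemma queueDecode_queueEncode (w : List Bool) (σ : Bool) (q : List Bool) :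
    queueDecode σ q (queueEncode σ q w) = w := by
  induction w generalizing σ q with
  | nil => cases q <;> rfl
  | cons b w ih =>
    rcases q with _ | ⟨h, t⟩
    · simp [queueEncode, queueDecode, ih]
    · cases b <;> cases σ <;> cases h <;> simp [queueEncode, queueDecode, ih]

lemma queueEncode_injective (σ : Bool) (q : List Bool) : Function.Injective (queueEncode σ q) :=
  Function.LeftInverse.injective (queueDecode_queueEncode · σ q)

lemma length_queueEncode (w : List Bool) (σ : Bool) (q : List Bool) :
    (queueEncode σ q w).length = w.length := by
  induction w generalizing σ q with
  | nil => cases q <;> rfl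
  | cons b w ih =>
    rcases q with _ | ⟨h, t⟩
    · simp [queueEncode, ih]
    · by_cases hb : b = σ <;> simp [queueEncode, hb, ih]

lemma queueEncode_isShuffle (w : List Bool) (σ : Bool) (q : List Bool)
    (hq : q.length + w.count σ = w.count (!σ)) :
    ∃ u, IsShuffle (queueEncode σ q w) u (q ++ u) := by
  induction w generalizing σ q with
  | nil =>
    obtain rfl : q = [] := List.length_eq_zero_iff.mp (by simpa using hq)
    exact ⟨[], .nil⟩
  | cons b w ih =>
    rcases q with _ | ⟨h, t⟩
    · obtain ⟨u, hu⟩ := ih b [b] (by cases b <;> cases σ <;> simp_all <;> omega)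
      exact ⟨b :: u, .left b hu⟩
    · by_cases hb : b = σ
      · subst hb
        obtain ⟨u, hu⟩ := ih b (h :: (t ++ [!h])) (by cases b <;> simp_all <;> omega)
        exact ⟨(!h) :: u, by simpa [queueEncode] using hu.left (!h)⟩
      · obtain rfl : b = !σ := by cases b <;> cases σ <;> simp_all
        obtain ⟨u, hu⟩ := ih σ t (by cases σ <;> simp_all <;> omega)
        exact ⟨u, by simpa [queueEncode] using hu.right h⟩

lemma count_true_ofFn_mem {m : ℕ} (A : Finset (Fin m)) :
    (List.ofFn fun i => decide (i ∈ A)).count true = A.card := by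
  rw [List.ofFn_eq_map, List.count_eq_countP, List.countP_map, List.countP_eq_length_filter,
    ← List.toFinset_card_of_nodup ((List.nodup_finRange m).filter _)]
  congr 1
  ext i
  simp

lemma choose_le_ncard_count_true (m k : ℕ) :
    m.choose k ≤ {w : List Bool | w.length = m ∧ w.count true = k}.ncard := by
  calc m.choose k = ((Finset.univ : Finset (Fin m)).powersetCard k : Set (Finset (Fin m))).ncard :=
        by simp
    _ ≤ _ := by
      refine Set.ncard_le_ncard_of_injOn (fun A => List.ofFn fun i => decide (i ∈ A)) ?_ ?_
        ((List.finite_length_eq Bool m).subset fun w hw => hw.1)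
      · intro A hA
        simpa [count_true_ofFn_mem] using hA
      · intro A _ B _ hAB
        ext i
        simpa using congrFun (List.ofFn_injective hAB) i

lemma isShuffleSquare_queueEncode {w : List Bool} (σ : Bool) (hw : w.count true = w.count false) :
    IsShuffleSquare (queueEncode σ [] w) := by
  obtain ⟨u, hu⟩ := queueEncode_isShuffle w σ [] (by cases σ <;> simp [hw])
  exact hu.isShuffleSquare

/-- the number of binary shuffle squares of semi-length `n`
is at least `C(2n, n)`. -/
theorem card_shuffleSquares_ge (n : ℕ) :
    Nat.choose (2 * n) n ≤ {s : List Bool | s.length = 2 * n ∧ IsShuffleSquare s}.ncard := by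
  calc (2 * n).choose n ≤ {w : List Bool | w.length = 2 * n ∧ w.count true = n}.ncard :=
        choose_le_ncard_count_true _ _
    _ ≤ _ := by
      refine Set.ncard_le_ncard_of_injOn (queueEncode true []) ?_
        (queueEncode_injective true []).injOn
        ((List.finite_length_eq Bool _).subset fun s hs => hs.1)
      rintro w ⟨hlen, hcount⟩
      refine ⟨by rw [length_queueEncode, hlen], isShuffleSquare_queueEncode true ?_⟩
      have := List.count_true_add_count_false w
      omega
end

section
/- Suppose s ∈ {0,1}^{2n} has an even number of 0's and an even number of 1's, t* ∈ [2n] is odd, and there exist j_1 ∈ {0,1} with j_1 ∈ B_{t*}(s) and j_2 ∈ {0,1} with j_2 ∈ B_{2n−t*}(rev(s)). Then j_1 = j_2 and s is a shuffle square. -/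
/-! A buffer `w` of `u` forces `u.count b ≡ w.count b (mod 2)`, so when every letter occurs an
even number of times in `s`, the one-letter buffers `[j₁]` of the prefix and `[j₂]` of the
reversed suffix must agree. Read backwards, the certificate for the suffix puts its copy of the
buffer in front of the suffix, where it matches the copy left over at the end of the prefix:
taking `A₁` on the prefix and the complement of the reversed certificate on the suffix splits
`s` into two equal halves. -/

namespace List

variable {α : Type*}

theorem map_fst_filter_zipIdx (l : List α) (k : ℕ) (c : ℕ → Bool) :
    ((l.zipIdx k).filter (fun p => c p.2)).map Prod.fst = subAt l (fun i => c (k + i)) := by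
  rw [zipIdx_eq_map_add, filter_map, map_map, subAt]
  rfl

theorem subAt_append (u v : List α) (c : ℕ → Bool) :
    subAt (u ++ v) c = subAt u c ++ subAt v (fun i => c (u.length + i)) := by
  rw [subAt, zipIdx_append, filter_append, map_append, map_fst_filter_zipIdx,
    map_fst_filter_zipIdx]
  simp only [zero_add]

theorem subAt_singleton (a : α) (c : ℕ → Bool) :
    subAt [a] c = if c 0 then [a] else [] := by
  cases h : c 0 <;> simp [subAt, h]

theorem subAt_cons (a : α) (l : List α) (c : ℕ → Bool) :
    subAt (a :: l) c = (if c 0 then [a] else []) ++ subAt l (fun i => c (i + 1)) := by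
  simpa [subAt_singleton, add_comm] using subAt_append [a] l c

theorem subAt_congr {l : List α} {c c' : ℕ → Bool} (h : ∀ i < l.length, c i = c' i) :
    subAt l c = subAt l c' := by
  refine congrArg (map Prod.fst) (filter_congr fun p hp => ?_)
  exact h p.2 (mem_zipIdx' hp).1

theorem subAt_reverse (l : List α) (c : ℕ → Bool) :
    subAt l.reverse c = (subAt l (fun k => c (l.length - 1 - k))).reverse := by
  induction l generalizing c with
  | nil => rfl
  | cons a l ih =>
    rw [reverse_cons, subAt_append, ih, subAt_singleton, subAt_cons, reverse_append]
    simp only [length_reverse, length_cons, Nat.add_sub_cancel, Nat.sub_zero, add_zero]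
    congr 2
    · exact subAt_congr fun i _ => congrArg c (by omega)
    · split <;> rfl

theorem subAt_append_subAt_not_perm (l : List α) (c : ℕ → Bool) :
    (subAt l c ++ subAt l (fun i => !c i)).Perm l := by
  rw [subAt, subAt, ← map_append]
  simpa using (filter_append_perm (fun p : α × ℕ => c p.2) l.zipIdx).map Prod.fst

end List

open List

section

variable {α : Type*}

theorem IsBufferOf.count_mod_two [DecidableEq α] {w l : List α} (h : IsBufferOf w l) (b : α) :
    l.count b % 2 = w.count b % 2 := by
  obtain ⟨c, hc⟩ := h
  have := (subAt_append_subAt_not_perm l c).count_eq b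
  rw [hc, count_append, count_append] at this
  omega

theorem IsBufferOf.eq_of_singleton [DecidableEq α] {a b : α} {u v : List α}
    (hu : IsBufferOf [a] u) (hv : IsBufferOf [b] v) (heven : Even (u.count a + v.count a)) :
    a = b := by
  have hu₂ := hu.count_mod_two a
  have hv₂ := hv.count_mod_two a
  rw [Nat.even_add, Nat.even_iff, Nat.even_iff] at heven
  by_contra hne
  rw [count_singleton_self] at hu₂
  rw [count_singleton, if_neg (by simpa using Ne.symm hne)] at hv₂
  omega

theorem IsBufferOf.exists_of_reverse {w l : List α} (h : IsBufferOf w l.reverse) :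
    ∃ c : ℕ → Bool, subAt l c = w.reverse ++ subAt l (fun i => !c i) := by
  obtain ⟨c, hc⟩ := h
  refine ⟨fun k => c (l.length - 1 - k), ?_⟩
  rw [subAt_reverse, subAt_reverse] at hc
  simpa using congrArg reverse hc

theorem IsBufferOf.isShuffleSquare_append {w u v : List α} (hu : IsBufferOf w u)
    (hv : IsBufferOf w.reverse v.reverse) : IsShuffleSquare (u ++ v) := by
  obtain ⟨c, hc⟩ := hu
  obtain ⟨c', hc'⟩ := hv.exists_of_reverse
  rw [reverse_reverse] at hc'
  set d : ℕ → Bool := fun i => if i < u.length then c i else !c' (i - u.length)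
  have hdu : subAt u d = subAt u c := subAt_congr fun i hi => if_pos hi
  have hdu' : subAt u (fun i => !d i) = subAt u (fun i => !c i) :=
    subAt_congr fun i hi => by simp [d, hi]
  have hdv : subAt v (fun i => d (u.length + i)) = subAt v (fun i => !c' i) :=
    subAt_congr fun i _ => by simp [d]
  have hdv' : subAt v (fun i => !d (u.length + i)) = subAt v c' :=
    subAt_congr fun i _ => by simp [d]
  refine ⟨d, ?_⟩
  rw [subAt_append, subAt_append, append_nil, hdu, hdu', hdv, hdv', hc, hc', append_assoc]

end

theorem glue_buffers_general (n : ℕ) (s : List Bool) (hlen : s.length = 2 * n)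
    (h0 : Even (s.count false)) (h1 : Even (s.count true))
    (t : ℕ)
    (j₁ j₂ : Bool) (hj₁ : [j₁] ∈ bufferSet s t)
    (hj₂ : [j₂] ∈ bufferSet s.reverse (2 * n - t)) :
    j₁ = j₂ ∧ IsShuffleSquare s := by
  have hsuffix : s.reverse.take (2 * n - t) = (s.drop t).reverse := by
    conv_lhs => rw [← take_append_drop t s, reverse_append]
    exact take_left' (by simp [hlen])
  rw [bufferSet, Set.mem_ofPred_eq, hsuffix] at hj₂
  have hj : j₁ = j₂ := hj₁.eq_of_singleton hj₂ <| by
    rw [count_reverse, ← count_append, take_append_drop]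
    cases j₁ <;> assumption
  refine ⟨hj, ?_⟩
  rw [← take_append_drop t s]
  exact hj₁.isShuffleSquare_append (by simpa [hj] using hj₂)

/-- gluing two buffer certificates. If `s ∈ {0,1}^{2n}` has even
counts of both letters, `t* ∈ [2n]` is odd, `[j₁] ∈ B_{t*}(s)` and
`[j₂] ∈ B_{2n-t*}(rev(s))`, then `j₁ = j₂` and `s` is a shuffle square. -/
theorem glue_buffers (n : ℕ) (s : List Bool) (hlen : s.length = 2 * n)
    (h0 : Even (s.count false)) (h1 : Even (s.count true))
    (t : ℕ) (ht1 : 1 ≤ t) (ht2 : t ≤ 2 * n) (htodd : Odd t)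
    (j₁ j₂ : Bool) (hj₁ : [j₁] ∈ bufferSet s t)
    (hj₂ : [j₂] ∈ bufferSet s.reverse (2 * n - t)) :
    j₁ = j₂ ∧ IsShuffleSquare s :=
  glue_buffers_general n s hlen h0 h1 t j₁ j₂ hj₁ hj₂
end
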